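/- Let R be a discrete valuation ring with maximal ideal (ϖ) and finite residue field k of cardinality q, and let y ∈ M_r(Frac R) with ϖ·y ∈ M_r(R). Suppose the image of ϖ·y in M_r(k) has rank d < r. Then the order of the image in GL_r(k) of the subgroup K'_y = { g ∈ GL_r(R) : (gᵀ − 1)·y ∈ M_r(R) } of GL_r(R) is divisible by q − 1. -/

import Mathlib

open Matrix

theorem aux18 {K : Type*} [Field K] [Fintype K] [DecidableEq K] {r d : ℕ} (hd : d < r)
    (Z : Matrix (Fin r) (Fin r) K) (hrank : Z.rank = d) :
    (Fintype.card K - 1) ∣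
      Nat.card {h : GL (Fin r) K // (h : Matrix (Fin r) (Fin r) K)ᵀ * Z = Z} := by
  classical
  let H : Subgroup (GL (Fin r) K) :=
    { carrier := {h | (h : Matrix (Fin r) (Fin r) K)ᵀ * Z = Z}
      one_mem' := by simp
      mul_mem' := by
        intro a b ha hb
        simp only [Set.mem_setOf_eq, Units.val_mul, Matrix.transpose_mul] at *
        rw [Matrix.mul_assoc, ha, hb]
      inv_mem' := by
        intro a ha
        simp only [Set.mem_setOf_eq] at *
        calc (↑a⁻¹ : Matrix (Fin r) (Fin r) K)ᵀ * Z
            = (↑a⁻¹ : Matrix (Fin r) (Fin r) K)ᵀ * ((a : Matrix (Fin r) (Fin r) K)ᵀ * Z) := by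
              rw [ha]
          _ = ((a : Matrix (Fin r) (Fin r) K) * (↑a⁻¹ : Matrix (Fin r) (Fin r) K))ᵀ * Z := by
              rw [← Matrix.mul_assoc, ← Matrix.transpose_mul]
          _ = Z := by rw [Units.mul_inv a]; simp }
  have hdetsurj : Function.Surjective
      ((Matrix.GeneralLinearGroup.det : GL (Fin r) K →* Kˣ).comp H.subtype) := by
    intro u
    have hdetZ : Z.det = 0 := by
      by_contra hc
      have : IsUnit Z := (Matrix.isUnit_iff_isUnit_det _).mpr (isUnit_iff_ne_zero.mpr hc)
      have := Matrix.rank_of_isUnit Z this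
      rw [hrank, Fintype.card_fin] at this
      omega
    obtain ⟨v, hv0, hv⟩ := Matrix.exists_vecMul_eq_zero_iff.mpr hdetZ
    obtain ⟨i0, hi0⟩ := Function.ne_iff.mp hv0
    have hi0' : v i0 ≠ 0 := by simpa using hi0
    set a : Fin r → K := fun i => if i = i0 then ((u : K) - 1) * (v i0)⁻¹ else 0 with ha
    set B : Matrix (Fin r) (Fin r) K := 1 + Matrix.vecMulVec v a with hB
    have hav : a ⬝ᵥ v = (u : K) - 1 := by
      rw [ha]
      simp only [dotProduct]
      rw [Finset.sum_eq_single i0]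
      · simp only [if_true]; field_simp
      · intro b _ hb; simp [hb]
      · simp
    have hdetB : B.det = (u : K) := by
      rw [hB, Matrix.vecMulVec_eq Unit, Matrix.det_one_add_replicateCol_mul_replicateRow, hav]
      ring
    have hBunit : IsUnit B := (Matrix.isUnit_iff_isUnit_det _).mpr
      (isUnit_iff_ne_zero.mpr (by rw [hdetB]; exact u.ne_zero))
    obtain ⟨bu, hbu⟩ := hBunit
    have hBmem : bu ∈ H := by
      show ((bu : GL (Fin r) K) : Matrix (Fin r) (Fin r) K)ᵀ * Z = Z
      rw [hbu, hB, Matrix.transpose_add, Matrix.transpose_one, Matrix.add_mul, Matrix.one_mul]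
      have : (Matrix.vecMulVec v a)ᵀ * Z = 0 := by
        rw [show (Matrix.vecMulVec v a)ᵀ = Matrix.vecMulVec a v by
          ext i j; simp [Matrix.vecMulVec_apply, mul_comm]]
        rw [Matrix.vecMulVec_eq Unit, Matrix.mul_assoc, ← Matrix.replicateRow_vecMul, hv]
        ext i j
        simp [Matrix.mul_apply]
      rw [this, add_zero]
    refine ⟨⟨bu, hBmem⟩, ?_⟩
    apply Units.ext
    show ((Matrix.GeneralLinearGroup.det bu : Kˣ) : K) = (u : K)
    have h1 : ((Matrix.GeneralLinearGroup.det bu : Kˣ) : K) =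
        ((bu : Matrix (Fin r) (Fin r) K)).det := rfl
    rw [h1, hbu, hdetB]
  have hdvd : Nat.card Kˣ ∣ Nat.card H :=
    Subgroup.card_dvd_of_surjective _ hdetsurj
  have hcardK : Nat.card Kˣ = Fintype.card K - 1 := by
    rw [Nat.card_eq_fintype_card, Fintype.card_units]
  rw [← hcardK]
  exact hdvd

/-- Let `R` be a DVR with maximal ideal `(ϖ)` and finite residue field `k` of cardinality
`q`, and `y ∈ M_r(Frac R)` with `ϖ·y` integral (with integral model `Y`). If the image of
`ϖ·y` in `M_r(k)` has rank `d < r`, then the order of the image in `GL_r(k)` of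
`K'_y = { g ∈ GL_r(R) : (gᵀ − 1)·y ∈ M_r(R) }` is divisible by `q − 1`. -/
theorem stmt18 (R : Type*) [CommRing R] [IsDomain R] [IsDiscreteValuationRing R]
    (ϖ : R) (hϖ : Irreducible ϖ)
    [Fintype (R ⧸ Ideal.span {ϖ})] (q : ℕ)
    (hq : Fintype.card (R ⧸ Ideal.span {ϖ}) = q)
    (r d : ℕ) (hd : d < r)
    (y : Matrix (Fin r) (Fin r) (FractionRing R))
    (Y : Matrix (Fin r) (Fin r) R)
    (hY : Y.map (algebraMap R (FractionRing R)) = algebraMap R (FractionRing R) ϖ • y)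
    (hrank : (Y.map (Ideal.Quotient.mk (Ideal.span {ϖ}))).rank = d) :
    (q - 1) ∣ Nat.card { M : Matrix (Fin r) (Fin r) (R ⧸ Ideal.span {ϖ}) //
      ∃ g : GL (Fin r) R,
        (∀ i j, (((((g : Matrix (Fin r) (Fin r) R).map
              (algebraMap R (FractionRing R)))ᵀ - 1) * y) i j ∈
            Set.range (algebraMap R (FractionRing R)))) ∧
        (g : Matrix (Fin r) (Fin r) R).map (Ideal.Quotient.mk (Ideal.span {ϖ})) = M } := by
  classical
  haveI hmax : (Ideal.span {ϖ}).IsMaximal := by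
    rw [← (IsDiscreteValuationRing.irreducible_iff_uniformizer ϖ).mp hϖ]
    exact IsLocalRing.maximalIdeal.isMaximal R
  letI : Field (R ⧸ Ideal.span {ϖ}) := Ideal.Quotient.field (Ideal.span {ϖ})
  have hφinj : Function.Injective (algebraMap R (FractionRing R)) :=
    IsFractionRing.injective R (FractionRing R)
  have hφϖ : algebraMap R (FractionRing R) ϖ ≠ 0 := by
    intro h
    exact hϖ.ne_zero (hφinj (by simpa using h))
  -- Key lemma: membership condition in terms of reduction
  have key : ∀ g : Matrix (Fin r) (Fin r) R,
      (∀ i j, (((g.map (algebraMap R (FractionRing R)))ᵀ - 1) * y) i j ∈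
          Set.range (algebraMap R (FractionRing R))) ↔
        (g.map (Ideal.Quotient.mk (Ideal.span {ϖ})))ᵀ *
            Y.map (Ideal.Quotient.mk (Ideal.span {ϖ})) =
          Y.map (Ideal.Quotient.mk (Ideal.span {ϖ})) := by
    intro g
    set φ := algebraMap R (FractionRing R) with hφ
    set π := Ideal.Quotient.mk (Ideal.span {ϖ}) with hπ
    have h1 : (g.map φ)ᵀ - 1 = (gᵀ - 1).map φ := by
      rw [Matrix.map_sub _ (map_sub φ), Matrix.transpose_map,
        Matrix.map_one φ (map_zero φ) (map_one φ)]
    have h2 : φ ϖ • (((gᵀ - 1).map φ) * y) = ((gᵀ - 1) * Y).map φ := by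
      rw [← Matrix.mul_smul, ← hY, ← Matrix.map_mul]
    have h3 : ∀ i j, ((((gᵀ - 1).map φ) * y) i j ∈ Set.range φ) ↔
        ϖ ∣ ((gᵀ - 1) * Y) i j := by
      intro i j
      have h2' : φ ϖ * (((gᵀ - 1).map φ) * y) i j = φ (((gᵀ - 1) * Y) i j) := by
        have := congrFun (congrFun h2 i) j
        simpa [Matrix.smul_apply, smul_eq_mul] using this
      constructor
      · rintro ⟨c, hc⟩
        refine ⟨c, hφinj ?_⟩
        rw [_root_.map_mul, hc]
        exact h2'.symm
      · rintro ⟨c, hc⟩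
        have : φ ϖ * φ c = φ ϖ * (((gᵀ - 1).map φ) * y) i j := by
          rw [← _root_.map_mul, ← hc, ← h2']
        exact ⟨c, mul_left_cancel₀ hφϖ this⟩
    have htr : (gᵀ - 1).map π = (g.map π)ᵀ - 1 := by
      rw [Matrix.map_sub _ (map_sub π), Matrix.transpose_map,
        Matrix.map_one π (map_zero π) (map_one π)]
    rw [h1]
    constructor
    · intro h
      have hz : ((gᵀ - 1) * Y).map π = 0 := by
        ext i j
        simp only [Matrix.map_apply, Matrix.zero_apply]
        rw [Ideal.Quotient.eq_zero_iff_mem, Ideal.mem_span_singleton]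
        exact (h3 i j).mp (h i j)
      rw [Matrix.map_mul, htr, Matrix.sub_mul, Matrix.one_mul] at hz
      exact sub_eq_zero.mp hz
    · intro h i j
      rw [h3]
      have hz : ((gᵀ - 1) * Y).map π = 0 := by
        rw [Matrix.map_mul, htr, Matrix.sub_mul, Matrix.one_mul, h, sub_self]
      have := congrFun (congrFun hz i) j
      rw [← Ideal.mem_span_singleton, ← Ideal.Quotient.eq_zero_iff_mem]
      simpa [Matrix.map_apply] using this
  -- Lifting units
  have lift : ∀ h : GL (Fin r) (R ⧸ Ideal.span {ϖ}), ∃ g : GL (Fin r) R,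
      (g : Matrix (Fin r) (Fin r) R).map (Ideal.Quotient.mk (Ideal.span {ϖ})) =
        (h : Matrix (Fin r) (Fin r) (R ⧸ Ideal.span {ϖ})) := by
    intro h
    set π := Ideal.Quotient.mk (Ideal.span {ϖ}) with hπ
    choose N hN using fun i j =>
      Ideal.Quotient.mk_surjective ((h : Matrix (Fin r) (Fin r) (R ⧸ Ideal.span {ϖ})) i j)
    have hNmap : (Matrix.of N).map π = (h : Matrix (Fin r) (Fin r) (R ⧸ Ideal.span {ϖ})) := by
      ext i j; exact hN i j
    have hdet : IsUnit (Matrix.of N).det := by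
      by_contra hc
      have hmem : (Matrix.of N).det ∈ IsLocalRing.maximalIdeal R := hc
      rw [(IsDiscreteValuationRing.irreducible_iff_uniformizer ϖ).mp hϖ] at hmem
      have h0 : π (Matrix.of N).det = 0 := Ideal.Quotient.eq_zero_iff_mem.mpr hmem
      rw [RingHom.map_det, show π.mapMatrix (Matrix.of N) = (Matrix.of N).map π from rfl,
        hNmap] at h0
      have hu : IsUnit (h : Matrix (Fin r) (Fin r) (R ⧸ Ideal.span {ϖ})).det :=
        (Matrix.isUnit_iff_isUnit_det _).mp h.isUnit
      rw [h0] at hu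
      exact hu.ne_zero rfl
    obtain ⟨u, hu⟩ := (Matrix.isUnit_iff_isUnit_det _).mpr hdet
    exact ⟨u, by rw [hu, hNmap]⟩
  -- bijection with the field-side subtype
  have hbij : Nat.card {h : GL (Fin r) (R ⧸ Ideal.span {ϖ}) //
      (h : Matrix (Fin r) (Fin r) (R ⧸ Ideal.span {ϖ}))ᵀ *
          Y.map (Ideal.Quotient.mk (Ideal.span {ϖ})) =
        Y.map (Ideal.Quotient.mk (Ideal.span {ϖ}))} =
      Nat.card { M : Matrix (Fin r) (Fin r) (R ⧸ Ideal.span {ϖ}) //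
      ∃ g : GL (Fin r) R,
        (∀ i j, (((((g : Matrix (Fin r) (Fin r) R).map
              (algebraMap R (FractionRing R)))ᵀ - 1) * y) i j ∈
            Set.range (algebraMap R (FractionRing R)))) ∧
        (g : Matrix (Fin r) (Fin r) R).map (Ideal.Quotient.mk (Ideal.span {ϖ})) = M } := by
    refine Nat.card_eq_of_bijective
      (fun h => ⟨((h : { h : GL (Fin r) (R ⧸ Ideal.span {ϖ}) // _ }).1 :
          Matrix (Fin r) (Fin r) (R ⧸ Ideal.span {ϖ})), ?_⟩) ⟨?_, ?_⟩
    · obtain ⟨g, hg⟩ := lift h.1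
      exact ⟨g, (key _).mpr (by rw [hg]; exact h.2), hg⟩
    · intro a b hab
      exact Subtype.ext (Units.ext (congrArg Subtype.val hab))
    · rintro ⟨M, g, hcond, hred⟩
      refine ⟨⟨Units.map ((Ideal.Quotient.mk (Ideal.span {ϖ})).mapMatrix).toMonoidHom g, ?_⟩,
        Subtype.ext ?_⟩
      · show ((g : Matrix (Fin r) (Fin r) R).map (Ideal.Quotient.mk (Ideal.span {ϖ})))ᵀ * _ = _
        exact (key _).mp hcond
      · exact hred
  rw [← hq, ← hbij]
  exact aux18 hd (Y.map (Ideal.Quotient.mk (Ideal.span {ϖ}))) hrank
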